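/- Let D ⊆ ℝ² be open and f : D → ℝ³ a regular C^{1M} immersion with ‖f_x‖ ≡ 1 and ‖f_y‖ ≡ 1. Let θ : D → (0,π) be continuous with cos θ = ⟨f_x, f_y⟩, and set N := (f_x × f_y)/sin θ. Assume N is C¹ and that ⟨f_x, N_x⟩ = 0, ⟨f_y, N_y⟩ = 0, and f_xy = (sin θ)·N on D (asymptotic Chebyshev coordinates with K = −1). Then on D: ⟨f_x, N_y⟩ = −sin θ and ⟨f_y, N_x⟩ = −sin θ; f_x = N × N_x and f_y = −N × N_y; ‖N_x‖ ≡ 1, ‖N_y‖ ≡ 1, and ⟨N_x, N_y⟩ = −cos θ. -/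

import Mathlib

noncomputable section

open Real Set

abbrev E3 : Type := EuclideanSpace ℝ (Fin 3)

/-- Partial derivative in the `x`-direction. -/
noncomputable def pdx {E : Type*} [NormedAddCommGroup E] [NormedSpace ℝ E]
    (f : ℝ × ℝ → E) (p : ℝ × ℝ) : E := lineDeriv ℝ f p ((1 : ℝ), (0 : ℝ))

/-- Partial derivative in the `y`-direction. -/
noncomputable def pdy {E : Type*} [NormedAddCommGroup E] [NormedSpace ℝ E]
    (f : ℝ × ℝ → E) (p : ℝ × ℝ) : E := lineDeriv ℝ f p ((0 : ℝ), (1 : ℝ))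

/-- `f` is C¹ on `D`, and the mixed second partials `∂y∂x f` and `∂x∂y f`
exist at every point of `D`, are continuous on `D`, and agree on `D`. -/
def C1M {E : Type*} [NormedAddCommGroup E] [NormedSpace ℝ E]
    (D : Set (ℝ × ℝ)) (f : ℝ × ℝ → E) : Prop :=
  ContDiffOn ℝ 1 f D ∧
  (∀ p ∈ D, LineDifferentiableAt ℝ (pdx f) p ((0 : ℝ), (1 : ℝ))) ∧
  (∀ p ∈ D, LineDifferentiableAt ℝ (pdy f) p ((1 : ℝ), (0 : ℝ))) ∧
  ContinuousOn (pdy (pdx f)) D ∧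
  ContinuousOn (pdx (pdy f)) D ∧
  (∀ p ∈ D, pdy (pdx f) p = pdx (pdy f) p)

/-- The cross product on ℝ³. -/
noncomputable def cross3 (a b : E3) : E3 :=
  (WithLp.equiv 2 (Fin 3 → ℝ)).symm
    ![a 1 * b 2 - a 2 * b 1, a 2 * b 0 - a 0 * b 2, a 0 * b 1 - a 1 * b 0]

/-- The Euclidean inner product on ℝ³. -/
noncomputable def dot (a b : E3) : ℝ := inner ℝ a b

/-- `N : D → S²` is weakly harmonic: it is C^{1M}, weakly regular, takes values in the
unit sphere, and `N_xy = N_yx = h • N` for some scalar function `h`. -/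
def WeakHarmonic (D : Set (ℝ × ℝ)) (N : ℝ × ℝ → E3) : Prop :=
  C1M D N ∧ (∀ p ∈ D, ‖N p‖ = 1) ∧
  (∀ p ∈ D, pdx N p ≠ 0 ∧ pdy N p ≠ 0) ∧
  ∃ h : ℝ × ℝ → ℝ, ∀ p ∈ D, pdy (pdx N) p = h p • N p ∧ pdx (pdy N) p = h p • N p

/-- A weakly-regular C^{1M} ps-front with associated weakly harmonic map `N`. -/
def PsFront (D : Set (ℝ × ℝ)) (f N : ℝ × ℝ → E3) : Prop :=
  C1M D f ∧ (∀ p ∈ D, pdx f p ≠ 0 ∧ pdy f p ≠ 0) ∧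
  WeakHarmonic D N ∧
  ∀ p ∈ D, pdx f p = cross3 (N p) (pdx N p) ∧ pdy f p = -cross3 (N p) (pdy N p)

/-!
Differentiating `⟨f_x, N⟩ = 0` in `y` and `⟨f_y, N⟩ = 0` in `x`, and using
`f_yx = f_xy = sin θ • N` with `‖N‖ = 1`, gives `⟨f_x, N_y⟩ = ⟨f_y, N_x⟩ = -sin θ`; differentiating
`‖N‖ = 1` gives `N_x, N_y ⊥ N`. A vector is determined by its inner products with `f_x`, `f_y` and
`f_x × f_y`, so `N_x = (cos θ • f_x - f_y) / sin θ` and `N_y = (cos θ • f_y - f_x) / sin θ`; the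
remaining identities follow from the vector triple product expansion.
-/

open Matrix WithLp
open scoped InnerProductSpace

lemma cross3_eq_crossProduct (a b : E3) : cross3 a b = toLp 2 (ofLp a ⨯₃ ofLp b) := by
  rw [cross3, cross_apply]; rfl

lemma inner_eq_dotProduct_ofLp (a b : E3) : ⟪a, b⟫_ℝ = ofLp a ⬝ᵥ ofLp b := by
  rw [EuclideanSpace.inner_eq_star_dotProduct, star_trivial, dotProduct_comm]

lemma inner_self_cross3 (a b : E3) : ⟪a, cross3 a b⟫_ℝ = 0 := by
  rw [inner_eq_dotProduct_ofLp, cross3_eq_crossProduct, ofLp_toLp, dot_self_cross]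

lemma inner_cross3_self (a b : E3) : ⟪b, cross3 a b⟫_ℝ = 0 := by
  rw [inner_eq_dotProduct_ofLp, cross3_eq_crossProduct, ofLp_toLp, dot_cross_self]

lemma inner_cross3_cross3 (u v w x : E3) :
    ⟪cross3 u v, cross3 w x⟫_ℝ = ⟪u, w⟫_ℝ * ⟪v, x⟫_ℝ - ⟪u, x⟫_ℝ * ⟪v, w⟫_ℝ := by
  simp only [inner_eq_dotProduct_ofLp, cross3_eq_crossProduct, cross_dot_cross]

lemma cross3_cross3 (u v w : E3) : cross3 (cross3 u v) w = ⟪u, w⟫_ℝ • v - ⟪v, w⟫_ℝ • u := by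
  simp only [inner_eq_dotProduct_ofLp, cross3_eq_crossProduct, cross_cross_eq_smul_sub_smul,
    toLp_sub, toLp_smul, toLp_ofLp]

lemma neg_cross3 (a b : E3) : -cross3 a b = cross3 b a := by
  rw [cross3_eq_crossProduct, cross3_eq_crossProduct, ← toLp_neg, cross_anticomm]

lemma cross3_smul_left (r : ℝ) (a b : E3) : cross3 (r • a) b = r • cross3 a b := by
  simp [cross3_eq_crossProduct]

lemma cross3_smul_right (r : ℝ) (a b : E3) : cross3 a (r • b) = r • cross3 a b := by
  simp [cross3_eq_crossProduct]

lemma cross3_sub_right (a b c : E3) : cross3 a (b - c) = cross3 a b - cross3 a c := by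
  simp [cross3_eq_crossProduct]

lemma cross3_neg_left (a b : E3) : cross3 (-a) b = -cross3 a b := by
  rw [← neg_one_smul ℝ a, cross3_smul_left, neg_one_smul]

lemma eq_of_inner_eq_of_cross3_ne_zero {a b v w : E3} (hab : cross3 a b ≠ 0)
    (ha : ⟪a, v⟫_ℝ = ⟪a, w⟫_ℝ) (hb : ⟪b, v⟫_ℝ = ⟪b, w⟫_ℝ)
    (hn : ⟪cross3 a b, v⟫_ℝ = ⟪cross3 a b, w⟫_ℝ) : v = w := by
  rw [← sub_eq_zero, ← inner_sub_right] at ha hb hn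
  rw [← sub_eq_zero, ← inner_self_eq_zero (𝕜 := ℝ)]
  have hcross : cross3 (cross3 a b) (v - w) = 0 := by
    rw [cross3_cross3, ha, hb, zero_smul, zero_smul, sub_zero]
  have lagrange := inner_cross3_cross3 (cross3 a b) (v - w) (cross3 a b) (v - w)
  rw [hcross, inner_zero_left, real_inner_comm, hn, zero_mul, sub_zero, eq_comm,
    mul_eq_zero] at lagrange
  exact lagrange.resolve_left (inner_self_ne_zero.mpr hab)

lemma norm_inv_smul_eq_one {E : Type*} [NormedAddCommGroup E] [NormedSpace ℝ E] {x : E} {s : ℝ}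
    (hs : s ≠ 0) (hx : ‖x‖ ^ 2 = s ^ 2) : ‖s⁻¹ • x‖ = 1 := by
  rw [← sq_abs s, sq_eq_sq₀ (norm_nonneg x) (abs_nonneg s)] at hx
  rw [norm_smul, norm_inv, Real.norm_eq_abs, hx, inv_mul_cancel₀ (abs_ne_zero.mpr hs)]

section UnitFrame

variable {a b : E3} {t : ℝ} (ha : ‖a‖ = 1) (hb : ‖b‖ = 1) (hab : ⟪a, b⟫_ℝ = cos t)
include ha hb hab

lemma norm_cross3_sq_of_inner_eq_cos : ‖cross3 a b‖ ^ 2 = sin t ^ 2 := by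
  rw [← real_inner_self_eq_norm_sq, inner_cross3_cross3, real_inner_self_eq_norm_sq,
    real_inner_self_eq_norm_sq, real_inner_comm a b, hab, ha, hb, sin_sq]
  ring

lemma norm_sub_sq_of_inner_eq_cos : ‖cos t • a - b‖ ^ 2 = sin t ^ 2 := by
  rw [norm_sub_sq_real, norm_smul, real_inner_smul_left, hab, ha, hb, Real.norm_eq_abs, mul_one,
    sq_abs, sin_sq]
  ring

variable (ht : sin t ≠ 0)
include ht

lemma eq_inv_smul_of_inner_eq {w : E3} (haw : ⟪a, w⟫_ℝ = 0) (hbw : ⟪b, w⟫_ℝ = -sin t)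
    (hnw : ⟪(sin t)⁻¹ • cross3 a b, w⟫_ℝ = 0) : w = (sin t)⁻¹ • (cos t • a - b) := by
  have hcross : cross3 a b ≠ 0 := by
    rw [← norm_ne_zero_iff, ← pow_ne_zero_iff two_ne_zero,
      norm_cross3_sq_of_inner_eq_cos ha hb hab]
    exact pow_ne_zero 2 ht
  rw [real_inner_smul_left, mul_eq_zero, or_iff_right (inv_ne_zero ht)] at hnw
  apply eq_of_inner_eq_of_cross3_ne_zero hcross
  · rw [haw, real_inner_smul_right, inner_sub_right, real_inner_smul_right,
      inner_self_eq_one_of_norm_eq_one ha, hab]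
    ring
  · rw [hbw, real_inner_smul_right, inner_sub_right, real_inner_smul_right, real_inner_comm,
      hab, inner_self_eq_one_of_norm_eq_one hb]
    field_simp; linarith [sin_sq_add_cos_sq t]
  · rw [hnw, real_inner_smul_right, inner_sub_right, real_inner_smul_right, real_inner_comm,
      inner_self_cross3, real_inner_comm, inner_cross3_self]; ring

lemma cross3_inv_smul_cross3 :
    cross3 ((sin t)⁻¹ • cross3 a b) ((sin t)⁻¹ • (cos t • a - b)) = a := by
  rw [cross3_smul_left, cross3_smul_right, cross3_sub_right, cross3_smul_right, cross3_cross3,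
    cross3_cross3, inner_self_eq_one_of_norm_eq_one ha, inner_self_eq_one_of_norm_eq_one hb,
    real_inner_comm, hab]
  match_scalars <;> field_simp <;> linarith [sin_sq_add_cos_sq t]

lemma inner_inv_smul_sub_inv_smul_sub :
    ⟪(sin t)⁻¹ • (cos t • a - b), (sin t)⁻¹ • (cos t • b - a)⟫_ℝ = -cos t := by
  simp only [real_inner_smul_left, real_inner_smul_right, inner_sub_left, inner_sub_right]
  rw [inner_self_eq_one_of_norm_eq_one ha, inner_self_eq_one_of_norm_eq_one hb,
    real_inner_comm a b, hab]
  field_simp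
  linear_combination cos t * sin_sq_add_cos_sq t

end UnitFrame

theorem asymptotic_frame {a b n nx ny : E3} {t : ℝ} (ha : ‖a‖ = 1) (hb : ‖b‖ = 1)
    (hab : ⟪a, b⟫_ℝ = cos t) (ht : sin t ≠ 0) (hn : n = (sin t)⁻¹ • cross3 a b)
    (hanx : ⟪a, nx⟫_ℝ = 0) (hbnx : ⟪b, nx⟫_ℝ = -sin t) (hnnx : ⟪n, nx⟫_ℝ = 0)
    (hany : ⟪a, ny⟫_ℝ = -sin t) (hbny : ⟪b, ny⟫_ℝ = 0) (hnny : ⟪n, ny⟫_ℝ = 0) :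
    a = cross3 n nx ∧ b = -cross3 n ny ∧ ‖nx‖ = 1 ∧ ‖ny‖ = 1 ∧ ⟪nx, ny⟫_ℝ = -cos t := by
  subst hn
  have hba : ⟪b, a⟫_ℝ = cos t := by rw [real_inner_comm, hab]
  have hflip : (sin t)⁻¹ • cross3 b a = -((sin t)⁻¹ • cross3 a b) := by
    rw [← neg_cross3, smul_neg]
  have hnx := eq_inv_smul_of_inner_eq ha hb hab ht hanx hbnx hnnx
  have hny := eq_inv_smul_of_inner_eq hb ha hba ht hbny hany
    (by rw [hflip, inner_neg_left, hnny, neg_zero])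
  refine ⟨?_, ?_, ?_, ?_, ?_⟩
  · rw [hnx, cross3_inv_smul_cross3 ha hb hab ht]
  · rw [hny, ← cross3_neg_left, ← hflip, cross3_inv_smul_cross3 hb ha hba ht]
  · rw [hnx, norm_inv_smul_eq_one ht (norm_sub_sq_of_inner_eq_cos ha hb hab)]
  · rw [hny, norm_inv_smul_eq_one ht (norm_sub_sq_of_inner_eq_cos hb ha hba)]
  · rw [hnx, hny, inner_inv_smul_sub_inv_smul_sub ha hb hab ht]

open Filter Topology

section LineDeriv

variable {E F : Type*} [NormedAddCommGroup E] [NormedSpace ℝ E] [NormedAddCommGroup F]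
  [InnerProductSpace ℝ F] {g₁ g₂ g n : E → F} {p v : E}

theorem inner_lineDeriv_eq_neg_of_eventually_inner_eq {c : ℝ} (h₁ : LineDifferentiableAt ℝ g₁ p v)
    (h₂ : LineDifferentiableAt ℝ g₂ p v) (hc : ∀ᶠ q in 𝓝 p, ⟪g₁ q, g₂ q⟫_ℝ = c) :
    ⟪g₁ p, lineDeriv ℝ g₂ p v⟫_ℝ = -⟪lineDeriv ℝ g₁ p v, g₂ p⟫_ℝ := by
  have hline : Tendsto (fun t : ℝ ↦ p + t • v) (𝓝 0) (𝓝 p) := by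
    simpa using ((continuous_id.smul continuous_const).const_add p).tendsto (0 : ℝ)
  have hconst : HasDerivAt (fun t : ℝ ↦ ⟪g₁ (p + t • v), g₂ (p + t • v)⟫_ℝ) 0 0 :=
    (hasDerivAt_const (0 : ℝ) c).congr_of_eventuallyEq (hline.eventually hc)
  have hprod := h₁.hasLineDerivAt.inner ℝ h₂.hasLineDerivAt
  rw [zero_smul, add_zero] at hprod
  linarith [hprod.unique hconst]

theorem inner_lineDeriv_eq_zero_of_eventually_norm_eq {r : ℝ} (h : LineDifferentiableAt ℝ g p v)
    (hr : ∀ᶠ q in 𝓝 p, ‖g q‖ = r) : ⟪g p, lineDeriv ℝ g p v⟫_ℝ = 0 := by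
  have := inner_lineDeriv_eq_neg_of_eventually_inner_eq h h
    (hr.mono fun q hq ↦ by rw [real_inner_self_eq_norm_sq, hq])
  linarith [real_inner_comm (g p) (lineDeriv ℝ g p v)]

theorem inner_lineDeriv_eq_neg_of_lineDeriv_eq_smul {s : ℝ} (hg : LineDifferentiableAt ℝ g p v)
    (hn : LineDifferentiableAt ℝ n p v) (horth : ∀ᶠ q in 𝓝 p, ⟪g q, n q⟫_ℝ = 0)
    (hunit : ‖n p‖ = 1) (hderiv : lineDeriv ℝ g p v = s • n p) :
    ⟪g p, lineDeriv ℝ n p v⟫_ℝ = -s := by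
  rw [inner_lineDeriv_eq_neg_of_eventually_inner_eq hg hn horth, hderiv, real_inner_smul_left,
    real_inner_self_eq_norm_sq, hunit, one_pow, mul_one]

end LineDeriv

theorem stmt_11_general (D : Set (ℝ × ℝ)) (hD : IsOpen D)
    (f N : ℝ × ℝ → E3) (θ : ℝ × ℝ → ℝ)
    (hf : C1M D f)
    (hE : ∀ p ∈ D, ‖pdx f p‖ = 1) (hG : ∀ p ∈ D, ‖pdy f p‖ = 1)
    (hθr : ∀ p ∈ D, θ p ∈ Set.Ioo 0 π)
    (hcos : ∀ p ∈ D, Real.cos (θ p) = dot (pdx f p) (pdy f p))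
    (hNdef : ∀ p ∈ D, N p = (Real.sin (θ p))⁻¹ • cross3 (pdx f p) (pdy f p))
    (hN : ContDiffOn ℝ 1 N D)
    (hasx : ∀ p ∈ D, dot (pdx f p) (pdx N p) = 0)
    (hasy : ∀ p ∈ D, dot (pdy f p) (pdy N p) = 0)
    (hfxy : ∀ p ∈ D, pdy (pdx f) p = Real.sin (θ p) • N p) :
    ∀ p ∈ D,
      dot (pdx f p) (pdy N p) = -Real.sin (θ p) ∧
      dot (pdy f p) (pdx N p) = -Real.sin (θ p) ∧
      pdx f p = cross3 (N p) (pdx N p) ∧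
      pdy f p = -cross3 (N p) (pdy N p) ∧
      ‖pdx N p‖ = 1 ∧ ‖pdy N p‖ = 1 ∧
      dot (pdx N p) (pdy N p) = -Real.cos (θ p) := by
  obtain ⟨-, hfx_y, hfy_x, -, -, hmixed⟩ := hf
  have hsin : ∀ q ∈ D, sin (θ q) ≠ 0 := fun q hq ↦
    (sin_pos_of_pos_of_lt_pi (hθr q hq).1 (hθr q hq).2).ne'
  have hNx : ∀ q ∈ D, ⟪pdx f q, N q⟫_ℝ = 0 := fun q hq ↦ by
    rw [hNdef q hq, real_inner_smul_right, inner_self_cross3, mul_zero]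
  have hNy : ∀ q ∈ D, ⟪pdy f q, N q⟫_ℝ = 0 := fun q hq ↦ by
    rw [hNdef q hq, real_inner_smul_right, inner_cross3_self, mul_zero]
  have hNN : ∀ q ∈ D, ‖N q‖ = 1 := fun q hq ↦ by
    rw [hNdef q hq]
    exact norm_inv_smul_eq_one (hsin q hq)
      (norm_cross3_sq_of_inner_eq_cos (hE q hq) (hG q hq) (hcos q hq).symm)
  intro p hp
  have hDp : D ∈ 𝓝 p := hD.mem_nhds hp
  have hN' : ∀ v, LineDifferentiableAt ℝ N p v := fun v ↦
    ((hN.differentiableOn one_ne_zero p hp).differentiableAt hDp).lineDifferentiableAt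
  have hxNy : ⟪pdx f p, pdy N p⟫_ℝ = -sin (θ p) :=
    inner_lineDeriv_eq_neg_of_lineDeriv_eq_smul (hfx_y p hp) (hN' _)
      (eventually_of_mem hDp hNx) (hNN p hp) (hfxy p hp)
  have hyNx : ⟪pdy f p, pdx N p⟫_ℝ = -sin (θ p) :=
    inner_lineDeriv_eq_neg_of_lineDeriv_eq_smul (hfy_x p hp) (hN' _)
      (eventually_of_mem hDp hNy) (hNN p hp) ((hmixed p hp).symm.trans (hfxy p hp))
  have hNNx : ⟪N p, pdx N p⟫_ℝ = 0 :=
    inner_lineDeriv_eq_zero_of_eventually_norm_eq (hN' _) (eventually_of_mem hDp hNN)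
  have hNNy : ⟪N p, pdy N p⟫_ℝ = 0 :=
    inner_lineDeriv_eq_zero_of_eventually_norm_eq (hN' _) (eventually_of_mem hDp hNN)
  exact ⟨hxNy, hyNx, asymptotic_frame (hE p hp) (hG p hp) (hcos p hp).symm (hsin p hp)
    (hNdef p hp) (hasx p hp) hyNx hNNx hxNy (hasy p hp) hNNy⟩

/-- For a regular C^{1M} immersion in asymptotic Chebyshev coordinates with `K = −1`
(`‖f_x‖ = ‖f_y‖ = 1`, `cos θ = ⟨f_x,f_y⟩` with `0 < θ < π`, `N = (f_x × f_y)/sin θ` C¹,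
`⟨f_x,N_x⟩ = ⟨f_y,N_y⟩ = 0`, `f_xy = (sin θ) • N`):
`⟨f_x,N_y⟩ = ⟨f_y,N_x⟩ = −sin θ`, `f_x = N × N_x`, `f_y = −N × N_y`,
`‖N_x‖ = ‖N_y‖ = 1`, and `⟨N_x,N_y⟩ = −cos θ` on `D`. -/
theorem stmt_11 (D : Set (ℝ × ℝ)) (hD : IsOpen D)
    (f N : ℝ × ℝ → E3) (θ : ℝ × ℝ → ℝ)
    (hf : C1M D f)
    (hreg : ∀ p ∈ D, LinearIndependent ℝ ![pdx f p, pdy f p])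
    (hE : ∀ p ∈ D, ‖pdx f p‖ = 1) (hG : ∀ p ∈ D, ‖pdy f p‖ = 1)
    (hθc : ContinuousOn θ D) (hθr : ∀ p ∈ D, θ p ∈ Set.Ioo 0 π)
    (hcos : ∀ p ∈ D, Real.cos (θ p) = dot (pdx f p) (pdy f p))
    (hNdef : ∀ p ∈ D, N p = (Real.sin (θ p))⁻¹ • cross3 (pdx f p) (pdy f p))
    (hN : ContDiffOn ℝ 1 N D)
    (hasx : ∀ p ∈ D, dot (pdx f p) (pdx N p) = 0)
    (hasy : ∀ p ∈ D, dot (pdy f p) (pdy N p) = 0)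
    (hfxy : ∀ p ∈ D, pdy (pdx f) p = Real.sin (θ p) • N p) :
    ∀ p ∈ D,
      dot (pdx f p) (pdy N p) = -Real.sin (θ p) ∧
      dot (pdy f p) (pdx N p) = -Real.sin (θ p) ∧
      pdx f p = cross3 (N p) (pdx N p) ∧
      pdy f p = -cross3 (N p) (pdy N p) ∧
      ‖pdx N p‖ = 1 ∧ ‖pdy N p‖ = 1 ∧
      dot (pdx N p) (pdy N p) = -Real.cos (θ p) :=
  stmt_11_general D hD f N θ hf hE hG hθr hcos hNdef hN hasx hasy hfxy

end
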